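/- Let f : S → E be a strictly increasing function from a set of epsilon numbers into the epsilon numbers, and let y be an ordinal with Ep(y) ⊆ S. Then y is an epsilon number if and only if y[f] is an epsilon number. -/

import Mathlib

open Ordinal

/-- An ordinal is an epsilon number if it is a fixed point of `ω ^ ·`. -/
def IsEpsilon (x : Ordinal.{0}) : Prop := ω ^ x = x

theorem cnf_fst_lt {x : Ordinal.{0}} (h : ¬ ω ^ x = x) {p : Ordinal × Ordinal}
    (hp : p ∈ CNF ω x) : p.1 < x := by
  have hx : x ≠ 0 := by
    rintro rfl
    simp [Ordinal.CNF.zero_right] at hp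
  have h1 : p.1 ≤ Ordinal.log ω x := Ordinal.CNF.fst_le_log hp
  have h2 : Ordinal.log ω x < x := by
    rcases lt_or_eq_of_le (Ordinal.log_le_self ω x) with h' | h'
    · exact h'
    · exfalso
      have hle := Ordinal.opow_log_le_self ω hx
      rw [h'] at hle
      exact h (le_antisymm hle (Ordinal.right_le_opow x one_lt_omega0))
  exact lt_of_le_of_lt h1 h2

open scoped Classical in
/-- The set of epsilon numbers occurring hereditarily in the Cantor normal form of `x`. -/
noncomputable def Ep (x : Ordinal.{0}) : Set Ordinal.{0} :=
  if h : ω ^ x = x then {x}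
  else ⋃ p : {q // q ∈ CNF ω x}, Ep p.1.1
termination_by x
decreasing_by exact cnf_fst_lt h p.2

open scoped Classical in
/-- Simultaneous substitution of the epsilon numbers occurring hereditarily in the
Cantor normal form of `x` by their values under `f`. -/
noncomputable def subst (f : Ordinal.{0} → Ordinal.{0}) (x : Ordinal.{0}) : Ordinal.{0} :=
  if h : ω ^ x = x then f x
  else (((CNF ω x).attach).map (fun p => ω ^ subst f p.1.1 * p.1.2)).sum
termination_by x
decreasing_by exact cnf_fst_lt h p.2

/-!
If `e` is an epsilon number and `e < x`, then `f e < x[f]`: descend along the leading exponent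
of the Cantor normal form of `x` until it equals `e`, where `x ≠ e = ω ^ e` leaves something
beyond the leading term `ω ^ (f e) = f e`.

Conversely, let `y` be no epsilon number with `z = y[f]` an epsilon number. Since `z` is
additively principal, the sum `y[f] = ∑ ω ^ (e[f]) * c` over the normal form of `y` has a term
equal to `z`, and a finite nonzero coefficient `c` forces `e[f] = z`. By induction `e` is an
epsilon number, so `f e = e[f] = z`; but `e < y` gives `f e < y[f] = z`.
-/

namespace Ordinal

theorem exists_mem_eq_of_list_sum_eq {o : Ordinal} (ho : IsPrincipal (· + ·) o) (ho0 : 0 < o)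
    {l : List Ordinal} (hl : l.sum = o) : ∃ a ∈ l, a = o := by
  by_contra! h
  have hlt : ∀ a ∈ l, a < o := fun a ha => (hl ▸ List.le_sum_of_mem ha).lt_of_ne (h a ha)
  exact (List.sum_induction (· < o) (fun _ _ ha hb => ho ha hb) ho0 hlt).ne hl

theorem lt_mul_add {a c t : Ordinal} (ha : 0 < a) (hc : 0 < c) (h : 1 < c ∨ 0 < t) :
    a < a * c + t := by
  rcases h with hc1 | ht
  · exact (lt_mul_of_one_lt_right ha hc1).trans_le le_self_add
  · exact (le_mul_left a hc).trans_lt (lt_add_of_pos_right _ ht)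

end Ordinal

namespace IsEpsilon

variable {e : Ordinal.{0}}

theorem pos (he : IsEpsilon e) : 0 < e := by
  rw [← show ω ^ e = e from he]
  exact opow_pos e omega0_pos

theorem isPrincipal_add (he : IsEpsilon e) : IsPrincipal (· + ·) e := by
  rw [← show ω ^ e = e from he]
  exact isPrincipal_add_omega0_opow e

theorem le_log_of_lt (he : IsEpsilon e) {x : Ordinal} (hx : e < x) : e ≤ log ω x :=
  le_log_of_opow_le one_lt_omega0 (he.symm ▸ hx.le)

theorem eq_of_omega0_opow_mul_eq (he : IsEpsilon e) {a c : Ordinal} (hc0 : 0 < c) (hc : c < ω)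
    (h : ω ^ a * c = e) : a = e := by
  refine le_antisymm ?_ ?_
  · calc a ≤ ω ^ a := right_le_opow a one_lt_omega0
      _ ≤ ω ^ a * c := le_mul_left _ hc0
      _ = e := h
  · have : ω ^ e < ω ^ Order.succ a := by
      rw [show ω ^ e = e from he, opow_succ, ← h]
      exact mul_lt_mul_of_pos_left hc (opow_pos a omega0_pos)
    exact Order.lt_succ_iff.1 ((opow_lt_opow_iff_right one_lt_omega0).1 this)

end IsEpsilon

section Substitution

variable {f : Ordinal.{0} → Ordinal.{0}} {x : Ordinal.{0}}

theorem mem_Ep_self (h : IsEpsilon x) : x ∈ Ep x := by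
  rw [Ep, dif_pos (show ω ^ x = x from h)]
  rfl

theorem Ep_subset_of_mem_CNF (h : ¬ IsEpsilon x) {p : Ordinal × Ordinal} (hp : p ∈ CNF ω x) :
    Ep p.1 ⊆ Ep x := by
  rw [Ep.eq_def x, dif_neg (show ¬ ω ^ x = x from h)]
  exact Set.subset_iUnion (fun q : {q // q ∈ CNF ω x} => Ep q.1.1) ⟨p, hp⟩

theorem subst_of_isEpsilon (f : Ordinal.{0} → Ordinal.{0}) (h : IsEpsilon x) :
    subst f x = f x := by
  rw [subst, dif_pos (show ω ^ x = x from h)]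

theorem subst_of_not_isEpsilon (f : Ordinal.{0} → Ordinal.{0}) (h : ¬ IsEpsilon x) :
    subst f x = ((CNF ω x).map fun p => ω ^ subst f p.1 * p.2).sum := by
  rw [subst, dif_neg (show ¬ ω ^ x = x from h)]
  exact congrArg List.sum
    (List.attach_map_val (f := fun p : Ordinal × Ordinal => ω ^ subst f p.1 * p.2))

theorem omega0_opow_subst_mul_pos (f : Ordinal.{0} → Ordinal.{0}) {p : Ordinal × Ordinal}
    (hp : p ∈ CNF ω x) : 0 < ω ^ subst f p.1 * p.2 :=
  mul_pos (opow_pos _ omega0_pos) (CNF.snd_pos hp)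

theorem omega0_opow_subst_mul_le_subst (f : Ordinal.{0} → Ordinal.{0}) (h : ¬ IsEpsilon x)
    {p : Ordinal × Ordinal} (hp : p ∈ CNF ω x) : ω ^ subst f p.1 * p.2 ≤ subst f x := by
  rw [subst_of_not_isEpsilon f h]
  exact List.le_sum_of_mem (List.mem_map_of_mem hp)

end Substitution

section Monotone

variable {S : Set Ordinal.{0}} {f : Ordinal.{0} → Ordinal.{0}}

theorem lt_subst_of_lt (hfE : ∀ e ∈ S, IsEpsilon (f e)) (hf : StrictMonoOn f S)
    {e : Ordinal.{0}} (he : IsEpsilon e) (heS : e ∈ S) (x : Ordinal.{0}) (hx : Ep x ⊆ S)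
    (hex : e < x) : f e < subst f x := by
  induction x using WellFoundedLT.induction with
  | _ x IH =>
  by_cases hxe : IsEpsilon x
  · rw [subst_of_isEpsilon f hxe]
    exact hf heS (hx (mem_Ep_self hxe)) hex
  have hcnf := CNF.ne_zero (b := ω) (pos_of_gt hex).ne'
  generalize hL : log ω x = L at hcnf
  generalize hc : x / ω ^ L = c at hcnf
  have hmem : (L, c) ∈ CNF ω x := hcnf ▸ List.mem_cons_self
  have hc0 : 0 < c := CNF.snd_pos hmem
  rcases (hL ▸ he.le_log_of_lt hex).lt_or_eq with heL | rfl
  · calc f e < subst f L :=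
          IH L (cnf_fst_lt hxe hmem) ((Ep_subset_of_mem_CNF hxe hmem).trans hx) heL
      _ ≤ ω ^ subst f L := right_le_opow _ one_lt_omega0
      _ ≤ ω ^ subst f L * c := le_mul_left _ hc0
      _ ≤ subst f x := omega0_opow_subst_mul_le_subst f hxe hmem
  -- the leading term is `ω ^ f e * c = f e * c`, and `x ≠ ω ^ e` leaves something beyond it
  set T := ((CNF ω (x % ω ^ e)).map fun p => ω ^ subst f p.1 * p.2).sum
  have hsubst : subst f x = f e * c + T := by
    rw [subst_of_not_isEpsilon f hxe, hcnf, List.map_cons, List.sum_cons,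
      subst_of_isEpsilon f he, show ω ^ f e = f e from hfE e heS]
  have hbeyond : c ≠ 1 ∨ x % ω ^ e ≠ 0 := by
    by_contra! h
    apply hxe
    rwa [← div_add_mod x (ω ^ e), h.2, add_zero, hc, h.1, mul_one, show ω ^ e = e from he]
  rw [hsubst]
  refine lt_mul_add (hfE e heS).pos hc0 ?_
  rcases hbeyond with hc1 | hr0
  · exact Or.inl (lt_of_le_of_ne (Order.one_le_iff_pos.2 hc0) hc1.symm)
  · obtain ⟨q, hq⟩ : ∃ q, q ∈ CNF ω (x % ω ^ e) := by
      rw [CNF.ne_zero hr0]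
      exact ⟨_, List.mem_cons_self⟩
    exact Or.inr <| (omega0_opow_subst_mul_pos f hq).trans_le
      (List.le_sum_of_mem (List.mem_map_of_mem hq))

theorem isEpsilon_of_isEpsilon_subst (hfE : ∀ e ∈ S, IsEpsilon (f e)) (hf : StrictMonoOn f S)
    (y : Ordinal.{0}) (hy : Ep y ⊆ S) (hz : IsEpsilon (subst f y)) : IsEpsilon y := by
  induction y using WellFoundedLT.induction with
  | _ y IH =>
  by_contra hye
  obtain ⟨t, ht, htz⟩ := exists_mem_eq_of_list_sum_eq hz.isPrincipal_add hz.pos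
    (subst_of_not_isEpsilon f hye).symm
  obtain ⟨p, hp, rfl⟩ := List.mem_map.1 ht
  have hp1 : subst f p.1 = subst f y :=
    hz.eq_of_omega0_opow_mul_eq (CNF.snd_pos hp) (CNF.snd_lt one_lt_omega0 hp) htz
  have hpy : p.1 < y := cnf_fst_lt hye hp
  have hEp : Ep p.1 ⊆ S := (Ep_subset_of_mem_CNF hye hp).trans hy
  have hpE : IsEpsilon p.1 := IH p.1 hpy hEp (hp1 ▸ hz)
  have hfp : f p.1 = subst f y := by rw [← subst_of_isEpsilon f hpE, hp1]
  exact (lt_subst_of_lt hfE hf hpE (hEp (mem_Ep_self hpE)) y hy hpy).ne hfp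

end Monotone

theorem stmt2_general (S : Set Ordinal.{0}) (f : Ordinal → Ordinal)
    (hfE : ∀ e ∈ S, IsEpsilon (f e))
    (hf : StrictMonoOn f S)
    (y : Ordinal) (hy : Ep y ⊆ S) :
    IsEpsilon y ↔ IsEpsilon (subst f y) := by
  refine ⟨fun h => ?_, isEpsilon_of_isEpsilon_subst hfE hf y hy⟩
  rw [subst_of_isEpsilon f h]
  exact hfE y (hy (mem_Ep_self h))

theorem stmt2 (S : Set Ordinal.{0}) (f : Ordinal → Ordinal)
    (hS : ∀ e ∈ S, IsEpsilon e) (hfE : ∀ e ∈ S, IsEpsilon (f e))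
    (hf : StrictMonoOn f S)
    (y : Ordinal) (hy : Ep y ⊆ S) :
    IsEpsilon y ↔ IsEpsilon (subst f y) :=
  stmt2_general S f hfE hf y hy
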